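/- arXiv:1209.5860 — 3 statements merged into one kernel-verified Lean document; each statement's English description precedes it below -/
import Mathlib

section
/- Let C be a completed PDAG (i.e., a mixed graph satisfying: (i) C is a chain graph; (ii) every chain component induces a chordal undirected graph; (iii) the configuration w → u − v with w, v nonadjacent does not occur as an induced subgraph; (iv) every directed edge is strongly protected). If x → y is a directed edge of C, then Π_x ≠ Π_y \ {x}, where Π_v denotes the set of parents of v in C. -/
structure MixedGraph (V : Type*) where
  dir : V → V → Prop
  undir : V → V → Prop
  undir_symm : ∀ x y, undir x y → undir y x
  dir_irrefl : ∀ x, ¬ dir x x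
  undir_irrefl : ∀ x, ¬ undir x x
  dir_asymm : ∀ x y, dir x y → ¬ dir y x
  not_both : ∀ x y, dir x y → ¬ undir x y

namespace MixedGraph

variable {V : Type*} (G : MixedGraph V)

/-- `a` and `b` are joined by some edge, oriented from `a` to `b` if directed. -/
def edge (a b : V) : Prop := G.dir a b ∨ G.undir a b

/-- `a` and `b` are adjacent (joined by a directed or undirected edge). -/
def adj (a b : V) : Prop := G.dir a b ∨ G.dir b a ∨ G.undir a b

/-- The consecutive (cyclic) pairs of the cycle `v :: l`. -/
def cyclePairs (v : V) (l : List V) : List (V × V) := (v :: l).zip (l ++ [v])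

/-- `v :: l` is a partially directed cycle: at least two distinct vertices, every
cyclically consecutive pair joined by an edge (directed forward or undirected),
and at least one such edge directed. -/
def IsPDCycle (v : V) (l : List V) : Prop :=
  l ≠ [] ∧ (v :: l).Nodup ∧
  (∀ p ∈ cyclePairs v l, G.edge p.1 p.2) ∧
  (∃ p ∈ cyclePairs v l, G.dir p.1 p.2)

/-- A chain graph contains no partially directed cycle. -/
def IsChainGraph : Prop := ∀ (v : V) (l : List V), ¬ G.IsPDCycle v l

/-- `v :: l` is an undirected cycle of length at least 4. -/
def IsUCycle (v : V) (l : List V) : Prop :=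
  4 ≤ (v :: l).length ∧ (v :: l).Nodup ∧
  (∀ p ∈ cyclePairs v l, G.undir p.1 p.2)

/-- The cycle `v :: l` has a chord: an undirected edge between two vertices of the
cycle that is not one of the cycle's edges. -/
def HasChord (v : V) (l : List V) : Prop :=
  ∃ a b, a ∈ v :: l ∧ b ∈ v :: l ∧ G.undir a b ∧
    (a, b) ∉ cyclePairs v l ∧ (b, a) ∉ cyclePairs v l

/-- Every undirected cycle of length at least 4 has a chord; equivalently every
chain component induces a chordal undirected graph. -/
def IsChordalUndir : Prop := ∀ v l, G.IsUCycle v l → G.HasChord v l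

/-- No induced subgraph `w → u − v` with `w, v` nonadjacent. -/
def NoFlag : Prop := ∀ w u v, G.dir w u → G.undir u v → G.adj w v

/-- The directed edge `v → u` is strongly protected: it occurs in one of the four
protecting configurations. -/
def StronglyProtected (v u : V) : Prop :=
  (∃ w, G.dir w v ∧ ¬ G.adj w u) ∨
  (∃ w, G.dir w u ∧ w ≠ v ∧ ¬ G.adj v w) ∨
  (∃ w, G.dir v w ∧ G.dir w u) ∨
  (∃ w w₁, w ≠ w₁ ∧ G.undir v w ∧ G.undir v w₁ ∧ G.dir w u ∧ G.dir w₁ u ∧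
    ¬ G.adj w w₁)

/-- Andersson's characterization: a completed PDAG (essential graph) is a chain
graph with chordal chain components, no induced flag `w → u − v`, and all
directed edges strongly protected. -/
def IsCompletedPDAG : Prop :=
  G.IsChainGraph ∧ G.IsChordalUndir ∧ G.NoFlag ∧
  ∀ v u, G.dir v u → G.StronglyProtected v u

/-- The neighbour set of `v`: vertices joined to `v` by an undirected edge. -/
def nbhd (v : V) : Set V := {u | G.undir v u}

/-- The parent set of `v`: vertices with a directed edge into `v`. -/
def parents (v : V) : Set V := {u | G.dir u v}

end MixedGraph

/-- In a completed PDAG, if `x → y` is a directed edge then the parent set of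
`x` is not equal to the parent set of `y` with `x` removed. -/
theorem stmt6 {V : Type*} (G : MixedGraph V) (hG : G.IsCompletedPDAG)
    (x y : V) (hxy : G.dir x y) :
    G.parents x ≠ G.parents y \ {x} := by
  intro h
  obtain ⟨_, _, _, hsp⟩ := hG
  rcases hsp x y hxy with ⟨w, hwx, hnadj⟩ | ⟨w, hwy, hwne, hnadj⟩ |
    ⟨w, hxw, hwy⟩ | ⟨w, w₁, _, hxw, _, hwy, _, _⟩
  · have : w ∈ G.parents y \ {x} := h ▸ hwx
    exact hnadj (Or.inl this.1)
  · have : w ∈ G.parents x := by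
      rw [h]; exact ⟨hwy, hwne⟩
    exact hnadj (Or.inr (Or.inl this))
  · have hwne : w ≠ x := by
      rintro rfl; exact G.dir_irrefl _ hxw
    have : w ∈ G.parents x := by
      rw [h]; exact ⟨hwy, hwne⟩
    exact G.dir_asymm x w hxw this
  · have hwne : w ≠ x := by
      rintro rfl; exact G.undir_irrefl _ hxw
    have : w ∈ G.parents x := by
      rw [h]; exact ⟨hwy, hwne⟩
    exact G.not_both w x this (G.undir_symm x w hxw)
end

section
/- In a chain graph C, if there exists a partially directed path from y to x, then there exists a partially directed path from y to x of the form y − u_1 − ⋯ − u_k → ⋯ → x in which all edges before some index are undirected and all edges after that index are directed, provided additionally that C is a completed PDAG (satisfies the property that no induced subgraph w → u − v with w, v nonadjacent occurs, and for any length-two configuration with a directed edge followed by an undirected edge among pairwise-ordered vertices the endpoints are adjacent appropriately). Formally: every minimal-length partially directed path from y to x in a completed PDAG C has the property that no directed edge is immediately followed by an undirected edge along the path. -/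
/-- A partially directed path from `y` to `x`: a list of distinct vertices
starting at `y`, ending at `x`, each consecutive pair joined by a directed edge
oriented forward or by an undirected edge. -/
def IsPDPath {V : Type*} (G : MixedGraph V) (l : List V) (y x : V) : Prop :=
  l.head? = some y ∧ l.getLast? = some x ∧ l.Nodup ∧ l.Chain' G.edge

namespace MixedGraph

variable {V : Type*} {G : MixedGraph V}

theorem IsChainGraph.not_dir_of_dir_undir (hG : G.IsChainGraph) {a b c : V}
    (hab : G.dir a b) (hbc : G.undir b c) : ¬ G.dir c a := by
  intro hca
  have hab' : a ≠ b := fun h => G.dir_irrefl a (h ▸ hab)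
  have hbc' : b ≠ c := fun h => G.undir_irrefl b (h ▸ hbc)
  have hac' : a ≠ c := by
    rintro rfl
    exact G.not_both a b hab (G.undir_symm b a hbc)
  refine hG a [b, c] ⟨List.cons_ne_nil _ _, ?_, ?_, (a, b), by simp [cyclePairs], hab⟩
  · simp [hab', hbc', hac']
  · simp only [cyclePairs, List.cons_append, List.nil_append, List.zip_cons_cons,
      List.zip_nil_right, List.mem_cons, List.not_mem_nil, or_false]
    rintro p (rfl | rfl | rfl)
    exacts [Or.inl hab, Or.inr hbc, Or.inl hca]

end MixedGraph

theorem IsPDPath.shortcut {V : Type*} {G : MixedGraph V} {s t : List V} {a b c y x : V}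
    (hl : IsPDPath G (s ++ a :: b :: c :: t) y x) (hac : G.edge a c) :
    IsPDPath G (s ++ a :: c :: t) y x := by
  obtain ⟨hhead, hlast, hnd, hch⟩ := hl
  have hsub : (s ++ a :: c :: t).Sublist (s ++ a :: b :: c :: t) :=
    (List.Sublist.refl s).append ((List.sublist_cons_self b (c :: t)).cons_cons a)
  refine ⟨?_, ?_, hnd.sublist hsub, ?_⟩
  · cases s <;> simpa using hhead
  · rw [show s ++ a :: b :: c :: t = (s ++ [a, b]) ++ c :: t by simp,
      List.getLast?_append_cons] at hlast
    rwa [show s ++ a :: c :: t = (s ++ [a]) ++ c :: t by simp, List.getLast?_append_cons]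
  · rw [List.Chain', List.isChain_append] at hch ⊢
    obtain ⟨hs, hrest, hjoin⟩ := hch
    rw [List.isChain_cons_cons, List.isChain_cons_cons] at hrest
    exact ⟨hs, List.isChain_cons_cons.mpr ⟨hac, hrest.2.2⟩,
      fun u hu v hv => hjoin u hu v (by simpa using hv)⟩

/-- In a completed PDAG, along any minimal-length partially directed path from
`y` to `x`, a directed edge is never immediately followed by an undirected
edge; hence the path has the form `y − u₁ − ⋯ − u_k → ⋯ → x`. -/
theorem stmt8 {V : Type*} (G : MixedGraph V) (hG : G.IsCompletedPDAG)
    (y x : V) (l : List V) (hl : IsPDPath G l y x)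
    (hmin : ∀ l', IsPDPath G l' y x → l.length ≤ l'.length) :
    ∀ a b c : V, [a, b, c] <:+: l → G.dir a b → ¬ G.undir b c := by
  rintro a b c ⟨s, t, rfl⟩ hab hbc
  obtain ⟨hchain, -, hflag, -⟩ := hG
  simp only [List.append_assoc, List.cons_append, List.nil_append] at hl hmin
  have hno_shortcut : ¬ G.edge a c := fun hac => by
    simpa using hmin _ (hl.shortcut hac)
  rcases hflag a b c hab hbc with hac | hca | hac
  · exact hno_shortcut (Or.inl hac)
  · exact hchain.not_dir_of_dir_undir hab hbc hca
  · exact hno_shortcut (Or.inr hac)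
end

section
/- Let C be a completed PDAG and let x, y be two nonadjacent vertices with equal parent sets Π_x = Π_y such that every undirected path from x to y contains a vertex in N_{xy} = N_x ∩ N_y. Let P' be the mixed graph obtained from C by adding the undirected edge x − y. Then P' is a chain graph, every chain component of P' is chordal, and P' contains no induced subgraph of the form w → u − v with w, v nonadjacent. -/
/-- An undirected path from `x` to `y`: a list of distinct vertices starting at
`x`, ending at `y`, with consecutive vertices joined by undirected edges. -/
def IsUPath {V : Type*} (G : MixedGraph V) (l : List V) (x y : V) : Prop :=
  l.head? = some x ∧ l.getLast? = some y ∧ l.Nodup ∧ l.Chain' G.undir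

/-! Adding `x − y` creates no partially directed cycle. Walk around a cycle of `P'` from the
head of one of its directed edges `c → d` back to `c`, keeping a vertex `q` with `q →` (current
vertex) in `C` and a semi-directed walk `c ⇝ q` in `C`, starting from `q = c`. A directed step
moves `q` forward; an undirected step `b − b'` of `C` keeps it, since in a chain graph without
flags `q → b − b'` forces `q → b'`; the new step `x − y` keeps it because `x` and `y` have the
same parents. At the end `q → c` closes the walk `c ⇝ q`, and its loop erasure is a partially
directed cycle of `C`.

A cycle of length at least four through `x − y` leaves an undirected path from `y` to `x` in
`C`, which passes through a common neighbour `z` of `x` and `y`; `x − z` and `y − z` cannot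
both be cycle edges, as the cycle would then be the triangle `x y z`. A flag `w → x − y`
cannot appear, since `w → x` implies `w → y`. -/

namespace List

variable {α : Type*}

theorem isChain_cons_append_singleton_iff {R : α → α → Prop} (a : α) (l : List α) (b : α) :
    IsChain R (a :: l ++ [b]) ↔ ∀ p ∈ (a :: l).zip (l ++ [b]), R p.1 p.2 := by
  induction l generalizing a with
  | nil => simp
  | cons c l ih =>
    rw [cons_append, cons_append, isChain_cons_cons, ← cons_append, ih, cons_append,
      zip_cons_cons, forall_mem_cons]

theorem mem_zip_cons_append_singleton {u a : α} {l : List α} (v : α)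
    (h : (u :: l).getLast? = some a) : (a, v) ∈ (u :: l).zip (l ++ [v]) := by
  induction l generalizing u with
  | nil => simp_all
  | cons w l ih => exact mem_cons_of_mem _ (ih (by simpa using h))

theorem eq_of_mem_zip_of_nodup_left {β : Type*} {l₁ : List α} {l₂ : List β} {a : α}
    {b b' : β} (hnd : l₁.Nodup) (h : (a, b) ∈ l₁.zip l₂) (h' : (a, b') ∈ l₁.zip l₂) :
    b = b' := by
  obtain ⟨i, hi, hpi⟩ := mem_iff_getElem.1 h
  obtain ⟨j, hj, hpj⟩ := mem_iff_getElem.1 h'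
  rw [getElem_zip, Prod.mk.injEq] at hpi hpj
  obtain rfl : i = j := (hnd.getElem_inj_iff).1 (hpi.1.trans hpj.1.symm)
  exact hpi.2.symm.trans hpj.2

theorem eq_of_mem_zip_of_nodup_right {β : Type*} {l₁ : List α} {l₂ : List β} {a a' : α}
    {b : β} (hnd : l₂.Nodup) (h : (a, b) ∈ l₁.zip l₂) (h' : (a', b) ∈ l₁.zip l₂) :
    a = a' := by
  have hswap : ∀ {c : α}, (c, b) ∈ l₁.zip l₂ → (b, c) ∈ l₂.zip l₁ := fun hc =>
    zip_swap l₁ l₂ ▸ mem_map_of_mem (f := Prod.swap) hc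
  exact eq_of_mem_zip_of_nodup_left hnd (hswap h) (hswap h')

theorem exists_nodup_isChain_of_reflTransGen {R : α → α → Prop} {a b : α}
    (h : Relation.ReflTransGen R a b) :
    ∃ l, (a :: l).Nodup ∧ IsChain R (a :: l) ∧ (a :: l).getLast? = some b := by
  induction h using Relation.ReflTransGen.head_induction_on with
  | refl => exact ⟨[], by simp, .singleton _, rfl⟩
  | @head a c hac _ ih =>
    obtain ⟨l, hnd, hch, hlast⟩ := ih
    by_cases ha : a ∈ c :: l
    · obtain ⟨s, t, hst⟩ := append_of_mem ha
      rw [hst] at hnd hch hlast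
      rw [getLast?_append_cons] at hlast
      exact ⟨t, hnd.of_append_right, hch.right_of_append, hlast⟩
    · exact ⟨c :: l, nodup_cons.2 ⟨ha, hnd⟩, hch.cons_cons hac, by simpa using hlast⟩

theorem IsChain.reflTransGen_of_mem_of_head_eq_getLast {R : α → α → Prop} {l : List α}
    (hl : IsChain R l) (hne : l ≠ []) (hcyc : l.head hne = l.getLast hne) {a b : α}
    (ha : a ∈ l) (hb : b ∈ l) : Relation.ReflTransGen R a b :=
  (IsChain.backwards_induction (fun x => Relation.ReflTransGen R x (l.getLast hne)) l hl
      (fun _ _ hxy hy => hy.head hxy) (fun _ => .refl) a ha).trans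
    (hcyc ▸ IsChain.induction (Relation.ReflTransGen R (l.head hne)) l hl
      (fun _ _ hxy hx => hx.tail hxy) (fun _ => .refl) b hb)

end List

theorem IsUPath.reverse {V : Type*} {G : MixedGraph V} {l : List V} {a b : V}
    (h : IsUPath G l a b) : IsUPath G l.reverse b a := by
  obtain ⟨hh, hl, hnd, hch⟩ := h
  exact ⟨by rwa [List.head?_reverse], by rwa [List.getLast?_reverse], List.nodup_reverse.2 hnd,
    List.isChain_reverse.2 (hch.imp fun _ _ => G.undir_symm _ _)⟩


namespace MixedGraph

open Relation

variable {V : Type*}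

section Cycles

variable {v a b : V} {l : List V}

theorem cyclePairs_eq_zip_rotate (v : V) (l : List V) :
    cyclePairs v l = (v :: l).zip ((v :: l).rotate 1) := by
  simp [cyclePairs]

theorem forall_mem_cyclePairs_iff {R : V → V → Prop} :
    (∀ p ∈ cyclePairs v l, R p.1 p.2) ↔ List.IsChain R (v :: l ++ [v]) :=
  (List.isChain_cons_append_singleton_iff v l v).symm

theorem getLast_mem_cyclePairs (h : (v :: l).getLast? = some a) : (a, v) ∈ cyclePairs v l :=
  List.mem_zip_cons_append_singleton v h

theorem snd_eq_of_mem_cyclePairs {b' : V} (hnd : (v :: l).Nodup) (h : (a, b) ∈ cyclePairs v l)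
    (h' : (a, b') ∈ cyclePairs v l) : b = b' :=
  List.eq_of_mem_zip_of_nodup_left hnd h h'

theorem fst_eq_of_mem_cyclePairs {a' : V} (hnd : (v :: l).Nodup) (h : (a, b) ∈ cyclePairs v l)
    (h' : (a', b) ∈ cyclePairs v l) : a = a' :=
  List.eq_of_mem_zip_of_nodup_right (by simpa using (List.nodup_rotate (n := 1)).2 hnd) h h'

theorem reflTransGen_of_mem_cycle {R : V → V → Prop} (h : ∀ p ∈ cyclePairs v l, R p.1 p.2)
    (ha : a ∈ v :: l) (hb : b ∈ v :: l) : ReflTransGen R a b :=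
  (forall_mem_cyclePairs_iff.1 h).reflTransGen_of_mem_of_head_eq_getLast (by simp) (by simp)
    (List.mem_append_left _ ha) (List.mem_append_left _ hb)

theorem mem_cyclePairs_rotate {k : ℕ} {m : List V} {p : V × V}
    (h : (v :: l).rotate k = a :: m) : p ∈ cyclePairs a m ↔ p ∈ cyclePairs v l := by
  rw [cyclePairs_eq_zip_rotate, cyclePairs_eq_zip_rotate, ← h, List.rotate_rotate, add_comm,
    ← List.rotate_rotate, List.zip, ← List.zipWith_rotate_distrib _ _ _ _ (by simp),
    List.mem_rotate, ← List.zip]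

theorem exists_rotate_eq_cons_cons (hl : l ≠ []) (h : (a, b) ∈ cyclePairs v l) :
    ∃ k r, (v :: l).rotate k = a :: b :: r := by
  rw [cyclePairs_eq_zip_rotate] at h
  obtain ⟨i, hi, hp⟩ := List.mem_iff_getElem.1 h
  rw [List.getElem_zip, Prod.mk.injEq] at hp
  have hlen : 2 ≤ (v :: l).length := by cases l <;> simp_all
  have hi' : i < (v :: l).length := by simpa using hi
  have ha := List.getElem?_rotate (l := v :: l) (n := i) (m := 0) (by omega)
  have hb := List.getElem?_rotate (l := v :: l) (n := i) (m := 1) (by omega)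
  have hb' := List.getElem?_rotate (l := v :: l) (n := 1) (m := i) hi'
  rw [List.getElem?_eq_getElem (by simpa using hi'), hp.2, add_comm] at hb'
  rw [zero_add, Nat.mod_eq_of_lt hi', List.getElem?_eq_getElem hi', hp.1] at ha
  match hM : (v :: l).rotate i, ha, hb with
  | c :: d :: r, ha, hb =>
    exact ⟨i, r, by rw [hM, Option.some.inj ha, Option.some.inj (hb.trans hb'.symm)]⟩
  | [], _, _ | [_], _, _ => simp_all

end Cycles

variable {G : MixedGraph V}

theorem IsUCycle.rotate {k : ℕ} {v a : V} {l m : List V} (hc : G.IsUCycle v l)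
    (h : (v :: l).rotate k = a :: m) : G.IsUCycle a m :=
  ⟨by rw [← h, List.length_rotate]; exact hc.1,
    by rw [← h]; exact List.nodup_rotate.2 hc.2.1,
    fun p hp => hc.2.2 p ((mem_cyclePairs_rotate h).1 hp)⟩

theorem HasChord.of_rotate {k : ℕ} {v a : V} {l m : List V} (hc : G.HasChord a m)
    (h : (v :: l).rotate k = a :: m) : G.HasChord v l := by
  obtain ⟨c, d, hc, hd, hcd, hcd', hdc'⟩ := hc
  exact ⟨c, d, List.mem_rotate.1 (h ▸ hc), List.mem_rotate.1 (h ▸ hd), hcd,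
    mt (mem_cyclePairs_rotate h).2 hcd', mt (mem_cyclePairs_rotate h).2 hdc'⟩

theorem IsChainGraph.not_reflTransGen_edge (hC : G.IsChainGraph) {a b : V}
    (hab : G.dir a b) : ¬ ReflTransGen G.edge b a := by
  intro hba
  obtain ⟨l, hnd, hch, hlast⟩ := List.exists_nodup_isChain_of_reflTransGen hba
  have hl : l ≠ [] := by
    rintro rfl
    exact G.dir_irrefl a (by simp_all)
  have hedge : List.IsChain G.edge (b :: l ++ [b]) :=
    List.isChain_append.2 ⟨hch, .singleton _, by simp [hlast, edge, hab]⟩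
  exact hC b l
    ⟨hl, hnd, forall_mem_cyclePairs_iff.2 hedge, (a, b), getLast_mem_cyclePairs hlast, hab⟩

theorem IsChainGraph.dir_of_dir_of_undir (hC : G.IsChainGraph) (hF : G.NoFlag) {a b c : V}
    (hab : G.dir a b) (hbc : G.undir b c) : G.dir a c := by
  rcases hF a b c hab hbc with hac | hca | hac
  · exact hac
  all_goals exfalso; refine hC.not_reflTransGen_edge hab (.tail (.single (Or.inr hbc)) ?_)
  · exact Or.inl hca
  · exact Or.inr (G.undir_symm _ _ hac)

structure IsAddUndirEdge (G G' : MixedGraph V) (x y : V) : Prop where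
  dir_iff : ∀ a b, G'.dir a b ↔ G.dir a b
  undir_iff : ∀ a b, G'.undir a b ↔ G.undir a b ∨ (a = x ∧ b = y) ∨ (a = y ∧ b = x)

namespace IsAddUndirEdge

variable {G G' : MixedGraph V} {x y : V}

theorem symm (h : IsAddUndirEdge G G' x y) : IsAddUndirEdge G G' y x :=
  ⟨h.dir_iff, fun a b => (h.undir_iff a b).trans (by tauto)⟩

theorem adj {a b : V} (h : IsAddUndirEdge G G' x y) (hab : G.adj a b) : G'.adj a b := by
  rcases hab with hab | hab | hab
  · exact Or.inl ((h.dir_iff _ _).2 hab)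
  · exact Or.inr (Or.inl ((h.dir_iff _ _).2 hab))
  · exact Or.inr (Or.inr ((h.undir_iff _ _).2 (Or.inl hab)))

theorem exists_dir_of_reflTransGen (h : IsAddUndirEdge G G' x y) (hC : G.IsChainGraph)
    (hF : G.NoFlag) (hpar : G.parents x = G.parents y) {p a b : V} (hpa : G.dir p a)
    (hab : ReflTransGen G'.edge a b) : ∃ q, G.dir q b ∧ ReflTransGen G.edge p q := by
  induction hab with
  | refl => exact ⟨p, hpa, .refl⟩
  | tail _ hbc ih =>
    obtain ⟨q, hqb, hpq⟩ := ih
    rcases hbc with hbc | hbc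
    · exact ⟨_, (h.dir_iff _ _).1 hbc, hpq.tail (Or.inl hqb)⟩
    · rcases (h.undir_iff _ _).1 hbc with hbc | ⟨rfl, rfl⟩ | ⟨rfl, rfl⟩
      · exact ⟨q, hC.dir_of_dir_of_undir hF hqb hbc, hpq⟩
      · exact ⟨q, show q ∈ G.parents _ from hpar ▸ hqb, hpq⟩
      · exact ⟨q, show q ∈ G.parents _ from hpar ▸ hqb, hpq⟩

theorem isChainGraph (h : IsAddUndirEdge G G' x y) (hC : G.IsChainGraph) (hF : G.NoFlag)
    (hpar : G.parents x = G.parents y) : G'.IsChainGraph := by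
  rintro v l ⟨-, -, hedge, ⟨a, b⟩, hab, hdir⟩
  have hba : ReflTransGen G'.edge b a := reflTransGen_of_mem_cycle hedge
    (by simpa [or_comm] using (List.of_mem_zip hab).2) (List.of_mem_zip hab).1
  obtain ⟨q, hqa, haq⟩ := h.exists_dir_of_reflTransGen hC hF hpar ((h.dir_iff a b).1 hdir) hba
  exact hC.not_reflTransGen_edge hqa haq

theorem noFlag (h : IsAddUndirEdge G G' x y) (hF : G.NoFlag)
    (hpar : G.parents x = G.parents y) : G'.NoFlag := by
  intro w u v hwu huv
  rw [h.dir_iff] at hwu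
  rcases (h.undir_iff u v).1 huv with huv | ⟨rfl, rfl⟩ | ⟨rfl, rfl⟩
  · exact h.adj (hF w u v hwu huv)
  · exact Or.inl ((h.dir_iff _ _).2 (show w ∈ G.parents _ from hpar ▸ hwu))
  · exact Or.inl ((h.dir_iff _ _).2 (show w ∈ G.parents _ from hpar ▸ hwu))

theorem isUPath_of_cycle (h : IsAddUndirEdge G G' x y) {r₀ : V} {r : List V}
    (hnd : (x :: y :: r₀ :: r).Nodup)
    (hundir : ∀ p ∈ cyclePairs x (y :: r₀ :: r), G'.undir p.1 p.2) :
    IsUPath G (y :: r₀ :: r ++ [x]) y x := by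
  have hyr₀ : (y, r₀) ∈ cyclePairs x (y :: r₀ :: r) := by simp [cyclePairs]
  refine ⟨rfl, List.getLast?_concat, by simpa using (List.nodup_rotate (n := 1)).2 hnd,
    (List.isChain_cons_append_singleton_iff _ _ _).2 fun ⟨a, b⟩ hab => ?_⟩
  have hab' : (a, b) ∈ cyclePairs x (y :: r₀ :: r) := List.mem_cons_of_mem _ hab
  rcases (h.undir_iff a b).1 (hundir _ hab') with hab'' | ⟨hax, -⟩ | ⟨hay, hbx⟩
  · exact hab''
  · exact absurd (hax ▸ (List.of_mem_zip hab).1) (List.nodup_cons.1 hnd).1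
  · have hr₀x : r₀ = x := snd_eq_of_mem_cyclePairs hnd hyr₀ (by subst hay hbx; exact hab')
    exact absurd (by simp [hr₀x]) (List.nodup_cons.1 hnd).1

theorem hasChord_of_isUCycle_cons_cons (h : IsAddUndirEdge G G' x y)
    (hpath : ∀ l : List V, IsUPath G l x y → ∃ z ∈ l, G.undir x z ∧ G.undir y z)
    {r : List V} (hcyc : G'.IsUCycle x (y :: r)) : G'.HasChord x (y :: r) := by
  obtain ⟨hlen, hnd, hundir⟩ := hcyc
  obtain ⟨r₀, r₁, r, rfl⟩ : ∃ r₀ r₁ r', r = r₀ :: r₁ :: r' := by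
    match r, hlen with
    | r₀ :: r₁ :: r', _ => exact ⟨r₀, r₁, r', rfl⟩
    | [], hlen | [_], hlen => simp at hlen
  obtain ⟨z, hz, hxz, hyz⟩ := hpath _ (h.isUPath_of_cycle hnd hundir).reverse
  have hzx : z ≠ x := fun hzx => G.undir_irrefl x (hzx ▸ hxz)
  have hzy : z ≠ y := fun hzy => G.undir_irrefl y (hzy ▸ hyz)
  have hzmem : z ∈ x :: y :: r₀ :: r₁ :: r := by simp at hz ⊢; tauto
  have hxy : (x, y) ∈ cyclePairs x (y :: r₀ :: r₁ :: r) := by simp [cyclePairs]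
  set w := (x :: y :: r₀ :: r₁ :: r).getLast (List.cons_ne_nil _ _)
  have hwx : (w, x) ∈ cyclePairs x (y :: r₀ :: r₁ :: r) :=
    getLast_mem_cyclePairs (List.getLast?_eq_some_getLast _)
  by_cases hzw : z = w
  · refine ⟨y, z, by simp, hzmem, (h.undir_iff _ _).2 (Or.inl hyz), fun hyz' => ?_,
      fun hzy' => hzx (fst_eq_of_mem_cyclePairs hnd hzy' hxy)⟩
    have hyr₀ : (y, r₀) ∈ cyclePairs x (y :: r₀ :: r₁ :: r) := by simp [cyclePairs]
    have hw : w ∈ r₁ :: r := by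
      simp only [w, List.getLast_cons_cons]
      exact List.getLast_mem _
    have hr₀ : r₀ ∉ r₁ :: r := by simp_all
    exact hr₀ (snd_eq_of_mem_cyclePairs hnd hyr₀ hyz' ▸ hzw ▸ hw)
  · exact ⟨x, z, by simp, hzmem, (h.undir_iff _ _).2 (Or.inl hxz),
      fun hxz' => hzy (snd_eq_of_mem_cyclePairs hnd hxy hxz').symm,
      fun hzx' => hzw (fst_eq_of_mem_cyclePairs hnd hzx' hwx)⟩

theorem isChordalUndir (h : IsAddUndirEdge G G' x y) (hCh : G.IsChordalUndir)
    (hpath : ∀ l : List V, IsUPath G l x y → ∃ z ∈ l, G.undir x z ∧ G.undir y z) :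
    G'.IsChordalUndir := by
  intro v l hcyc
  by_cases hG : ∀ p ∈ cyclePairs v l, G.undir p.1 p.2
  · obtain ⟨a, b, ha, hb, hab, hab', hba'⟩ := hCh v l ⟨hcyc.1, hcyc.2.1, hG⟩
    exact ⟨a, b, ha, hb, (h.undir_iff a b).2 (Or.inl hab), hab', hba'⟩
  push Not at hG
  obtain ⟨⟨a, b⟩, hmem, hab⟩ := hG
  have hl : l ≠ [] := by
    rintro rfl
    simpa using hcyc.1
  obtain ⟨k, r, hrot⟩ := exists_rotate_eq_cons_cons hl hmem
  have hcyc' := hcyc.rotate hrot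
  rcases (h.undir_iff a b).1 (hcyc.2.2 _ hmem) with hab' | ⟨rfl, rfl⟩ | ⟨rfl, rfl⟩
  · exact absurd hab' hab
  · exact (h.hasChord_of_isUCycle_cons_cons hpath hcyc').of_rotate hrot
  · refine (h.symm.hasChord_of_isUCycle_cons_cons (fun l hl => ?_) hcyc').of_rotate hrot
    obtain ⟨z, hz, hbz, haz⟩ := hpath _ hl.reverse
    exact ⟨z, List.mem_reverse.1 hz, haz, hbz⟩

end IsAddUndirEdge

end MixedGraph

theorem stmt12_general {V : Type*} (G : MixedGraph V) (hG : G.IsCompletedPDAG)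
    (x y : V) (hpar : G.parents x = G.parents y)
    (hpath : ∀ l : List V, IsUPath G l x y →
      ∃ z ∈ l, G.undir x z ∧ G.undir y z)
    (G' : MixedGraph V)
    (hdir : ∀ a b, G'.dir a b ↔ G.dir a b)
    (hundir : ∀ a b, G'.undir a b ↔
      (G.undir a b ∨ (a = x ∧ b = y) ∨ (a = y ∧ b = x))) :
    G'.IsChainGraph ∧ G'.IsChordalUndir ∧ G'.NoFlag := by
  obtain ⟨hC, hCh, hF, -⟩ := hG
  have h : G.IsAddUndirEdge G' x y := ⟨hdir, hundir⟩
  exact ⟨h.isChainGraph hC hF hpar, h.isChordalUndir hCh hpath, h.noFlag hF hpar⟩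

/-- Inserting an undirected edge `x − y` between nonadjacent vertices of a
completed PDAG with equal parent sets, such that every undirected path from
`x` to `y` contains a common neighbour of `x` and `y`, yields a graph that is
a chain graph, has chordal chain components, and contains no induced flag
`w → u − v` with `w, v` nonadjacent. -/
theorem stmt12 {V : Type*} (G : MixedGraph V) (hG : G.IsCompletedPDAG)
    (x y : V) (hne : x ≠ y) (hnonadj : ¬ G.adj x y)
    (hpar : G.parents x = G.parents y)
    (hpath : ∀ l : List V, IsUPath G l x y →
      ∃ z ∈ l, G.undir x z ∧ G.undir y z)
    (G' : MixedGraph V)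
    (hdir : ∀ a b, G'.dir a b ↔ G.dir a b)
    (hundir : ∀ a b, G'.undir a b ↔
      (G.undir a b ∨ (a = x ∧ b = y) ∨ (a = y ∧ b = x))) :
    G'.IsChainGraph ∧ G'.IsChordalUndir ∧ G'.NoFlag :=
  stmt12_general G hG x y hpar hpath G' hdir hundir
end
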